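/- Let $n > k \geq 1$ be integers, $N = 2^n - 1$, $m = 2^k - 1$. Let $S$ be a uniformly random $m$-element subset of $\{1, \ldots, N\}$ with $W_{(1)} = \min S$, and let $G$ be a random variable on $\{1, \ldots, 2^n\}$ with $P(G = j) = p_j$, independent of $S$. Fix an integer $q$ with $1 \leq q \leq N - m + 1$, suppose $P(G > q) = 1 - \sum_{j=1}^{q} p_j$, and suppose the denominator below is positive. Then $\frac{P(G>q)\,P(W_{(1)}=q)}{P(G=q)\,P(W_{(1)}\geq q) + P(G>q)\,P(W_{(1)}=q)} = \frac{\left(1 - \sum_{j=1}^{q} p_j\right)\frac{2^k-1}{2^n-q}}{p_q + \left(1 - \sum_{j=1}^{q} p_j\right)\frac{2^k-1}{2^n-q}}$. -/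

import Mathlib

/-!
The minimum `W` of a uniformly random `m`-subset of `{1, …, N}` satisfies
`P(W = q) = m / (N + 1 - q) · P(W ≥ q)`: the subsets with minimum at least `q` are the
`m`-subsets of `{q, …, N}`, those with minimum exactly `q` are counted by Pascal's rule as
`C(N - q, m - 1)`, and `(N + 1 - q) C(N - q, m - 1) = m C(N + 1 - q, m)`. Substituting this into
the posterior, the common factor `P(W ≥ q)` cancels; it is positive because `q ≤ N - m + 1`.
-/

open MeasureTheory ProbabilityTheory
open scoped ENNReal

/-- The `i`-th smallest element (1-indexed) of a finite set of naturals. -/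
def nthSmallest (s : Finset ℕ) (i : ℕ) : ℕ := (s.sort (· ≤ ·)).getD (i - 1) 0

open Finset

theorem measure_setOf_comp_eq_card_filter_mul_inv {Ω α : Type*} [MeasurableSpace Ω]
    (μ : Measure Ω) [IsProbabilityMeasure μ] (X : Ω → α) (T : Finset α)
    (hmeas : ∀ a, MeasurableSet (X ⁻¹' {a}))
    (hunif : ∀ a ∈ T, μ (X ⁻¹' {a}) = (#T : ℝ≥0∞)⁻¹)
    (hsupp : μ {ω | X ω ∈ T} = 1) (Q : α → Prop) [DecidablePred Q] :
    μ {ω | Q (X ω)} = #(T.filter Q) * (#T : ℝ≥0∞)⁻¹ := by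
  have hT : MeasurableSet {ω | X ω ∈ T} := by
    rw [← Set.preimage_ofPred_eq, Finset.setOfPred_mem, ← set_biUnion_preimage_singleton]
    exact T.measurableSet_biUnion fun a _ ↦ hmeas a
  rw [← measure_inter_conull ((prob_compl_eq_zero_iff hT).2 hsupp)]
  have hfilter : {ω | Q (X ω)} ∩ {ω | X ω ∈ T} = X ⁻¹' ↑(T.filter Q) := by
    ext ω; simp [and_comm]
  rw [hfilter, ← sum_measure_preimage_singleton _ fun a _ ↦ hmeas a,
    sum_congr rfl fun a ha ↦ hunif a (mem_filter.1 ha).1, sum_const, nsmul_eq_mul]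

theorem nthSmallest_one_eq_min' {s : Finset ℕ} (hs : s.Nonempty) :
    nthSmallest s 1 = s.min' hs := by
  have hlen : 0 < (s.sort (· ≤ ·)).length := by
    rw [length_sort]; exact card_pos.2 hs
  rw [nthSmallest, List.getD_eq_getElem _ _ (by simpa using hlen)]
  simpa using sorted_zero_eq_min' (h := hlen)

theorem le_nthSmallest_one_iff {s : Finset ℕ} (hs : s.Nonempty) {q : ℕ} :
    q ≤ nthSmallest s 1 ↔ ∀ x ∈ s, q ≤ x := by
  rw [nthSmallest_one_eq_min' hs, le_min'_iff]

section Counting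

variable {N m q : ℕ}

theorem filter_powersetCard_le_nthSmallest_one (hm : 1 ≤ m) (hq : 1 ≤ q) :
    ((Icc 1 N).powersetCard m).filter (q ≤ nthSmallest · 1) = (Icc q N).powersetCard m := by
  ext s
  simp only [mem_filter, mem_powersetCard]
  constructor
  · rintro ⟨⟨hsub, hcard⟩, hmin⟩
    rw [le_nthSmallest_one_iff (card_pos.1 (hcard ▸ hm))] at hmin
    exact ⟨fun x hx ↦ mem_Icc.2 ⟨hmin x hx, (mem_Icc.1 (hsub hx)).2⟩, hcard⟩
  · rintro ⟨hsub, hcard⟩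
    rw [le_nthSmallest_one_iff (card_pos.1 (hcard ▸ hm))]
    refine ⟨⟨fun x hx ↦ ?_, hcard⟩, fun x hx ↦ (mem_Icc.1 (hsub hx)).1⟩
    obtain ⟨hqx, hxN⟩ := mem_Icc.1 (hsub hx)
    exact mem_Icc.2 ⟨hq.trans hqx, hxN⟩

theorem card_filter_le_nthSmallest_one (hm : 1 ≤ m) (hq : 1 ≤ q) :
    #(((Icc 1 N).powersetCard m).filter (q ≤ nthSmallest · 1)) = (N + 1 - q).choose m := by
  rw [filter_powersetCard_le_nthSmallest_one hm hq, card_powersetCard, Nat.card_Icc]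

theorem card_filter_nthSmallest_one_eq (hm : 1 ≤ m) (hq : 1 ≤ q) (hqN : q ≤ N) :
    #(((Icc 1 N).powersetCard m).filter (nthSmallest · 1 = q)) = (N - q).choose (m - 1) := by
  have hsplit : ((Icc 1 N).powersetCard m).filter (q ≤ nthSmallest · 1) =
      ((Icc 1 N).powersetCard m).filter (nthSmallest · 1 = q) ∪
        ((Icc 1 N).powersetCard m).filter (q + 1 ≤ nthSmallest · 1) := by
    rw [← filter_or]; congr! 2; omega
  have hpascal := card_filter_le_nthSmallest_one (N := N) hm hq
  rw [hsplit, card_union_of_disjoint (disjoint_filter.2 fun s _ h ↦ by omega),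
    card_filter_le_nthSmallest_one hm (by omega)] at hpascal
  obtain ⟨a, rfl⟩ : ∃ a, N = q + a := ⟨N - q, by omega⟩
  obtain ⟨b, rfl⟩ : ∃ b, m = b + 1 := ⟨m - 1, by omega⟩
  rw [show q + a + 1 - q = a + 1 by omega, show q + a + 1 - (q + 1) = a by omega,
    Nat.choose_succ_succ'] at hpascal
  simp only [Nat.add_sub_cancel_left, Nat.add_sub_cancel]
  omega

theorem card_filter_nthSmallest_one_eq_mul (hm : 1 ≤ m) (hq : 1 ≤ q) (hqN : q ≤ N) :
    #(((Icc 1 N).powersetCard m).filter (nthSmallest · 1 = q)) * (N + 1 - q) =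
      m * #(((Icc 1 N).powersetCard m).filter (q ≤ nthSmallest · 1)) := by
  rw [card_filter_nthSmallest_one_eq hm hq hqN, card_filter_le_nthSmallest_one hm hq]
  obtain ⟨a, rfl⟩ : ∃ a, N = q + a := ⟨N - q, by omega⟩
  obtain ⟨b, rfl⟩ : ∃ b, m = b + 1 := ⟨m - 1, by omega⟩
  rw [show q + a + 1 - q = a + 1 by omega, Nat.add_sub_cancel_left, Nat.add_sub_cancel,
    mul_comm, Nat.add_one_mul_choose_eq, mul_comm]

end Counting

section UniformSubset

variable {Ω : Type*} [MeasurableSpace Ω] (μ : Measure Ω) [IsProbabilityMeasure μ]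
  (S : Ω → Finset ℕ) {N m q : ℕ}

theorem measure_nthSmallest_one_eq
    (hSmeas : ∀ s, MeasurableSet (S ⁻¹' {s}))
    (hunif : ∀ s ∈ (Icc 1 N).powersetCard m,
      μ (S ⁻¹' {s}) = (#((Icc 1 N).powersetCard m) : ℝ≥0∞)⁻¹)
    (hsupp : μ {ω | S ω ∈ (Icc 1 N).powersetCard m} = 1)
    (hm : 1 ≤ m) (hq : 1 ≤ q) (hqN : q ≤ N) :
    μ {ω | nthSmallest (S ω) 1 = q} =
      ((m : ℕ) : ℝ≥0∞) / ((N + 1 - q : ℕ) : ℝ≥0∞) * μ {ω | q ≤ nthSmallest (S ω) 1} := by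
  have hd : ((N + 1 - q : ℕ) : ℝ≥0∞) ≠ 0 := by exact_mod_cast (show N + 1 - q ≠ 0 by omega)
  rw [measure_setOf_comp_eq_card_filter_mul_inv μ S _ hSmeas hunif hsupp (nthSmallest · 1 = q),
    measure_setOf_comp_eq_card_filter_mul_inv μ S _ hSmeas hunif hsupp (q ≤ nthSmallest · 1),
    ← mul_assoc,
    ← ENNReal.mul_div_right_comm, ← Nat.cast_mul, ← card_filter_nthSmallest_one_eq_mul hm hq hqN,
    Nat.cast_mul, ENNReal.mul_div_cancel_right hd (ENNReal.natCast_ne_top _)]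

theorem measure_le_nthSmallest_one_ne_zero
    (hSmeas : ∀ s, MeasurableSet (S ⁻¹' {s}))
    (hunif : ∀ s ∈ (Icc 1 N).powersetCard m,
      μ (S ⁻¹' {s}) = (#((Icc 1 N).powersetCard m) : ℝ≥0∞)⁻¹)
    (hsupp : μ {ω | S ω ∈ (Icc 1 N).powersetCard m} = 1)
    (hm : 1 ≤ m) (hq : 1 ≤ q) (hqm : q + m ≤ N + 1) :
    μ {ω | q ≤ nthSmallest (S ω) 1} ≠ 0 := by
  rw [measure_setOf_comp_eq_card_filter_mul_inv μ S _ hSmeas hunif hsupp (q ≤ nthSmallest · 1),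
    card_filter_le_nthSmallest_one hm hq]
  exact mul_ne_zero (Nat.cast_ne_zero.2 (Nat.choose_pos (by omega)).ne')
    (ENNReal.inv_ne_zero.2 (ENNReal.natCast_ne_top _))

end UniformSubset

theorem grand_single_decoding_error_probability_formula_general
    (n k : ℕ) (hk : 1 ≤ k) (hkn : k < n)
    {Ω : Type*} [MeasurableSpace Ω] (μ : Measure Ω) [IsProbabilityMeasure μ]
    (S : Ω → Finset ℕ)
    (hSmeas : ∀ s : Finset ℕ, MeasurableSet (S ⁻¹' {s}))
    (hunif : ∀ s ∈ (Finset.Icc 1 (2 ^ n - 1)).powersetCard (2 ^ k - 1),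
      μ (S ⁻¹' {s})
        = (((Finset.Icc 1 (2 ^ n - 1)).powersetCard (2 ^ k - 1)).card : ℝ≥0∞)⁻¹)
    (hsupp : μ {ω | S ω ∈ (Finset.Icc 1 (2 ^ n - 1)).powersetCard (2 ^ k - 1)} = 1)
    (G : Ω → ℕ)
    (p : ℕ → ℝ≥0∞) (hp : ∀ j, μ {ω | G ω = j} = p j)
    (q : ℕ) (hq1 : 1 ≤ q) (hqN : q ≤ (2 ^ n - 1) - (2 ^ k - 1) + 1)
    (hGtail : μ {ω | q < G ω} = 1 - ∑ j ∈ Finset.Icc 1 q, p j) :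
    (μ {ω | q < G ω} * μ {ω | nthSmallest (S ω) 1 = q}) /
      (μ {ω | G ω = q} * μ {ω | q ≤ nthSmallest (S ω) 1} +
        μ {ω | q < G ω} * μ {ω | nthSmallest (S ω) 1 = q})
    = ((1 - ∑ j ∈ Finset.Icc 1 q, p j) *
        (((2 ^ k - 1 : ℕ) : ℝ≥0∞) / ((2 ^ n - q : ℕ) : ℝ≥0∞))) /
      (p q + (1 - ∑ j ∈ Finset.Icc 1 q, p j) *
        (((2 ^ k - 1 : ℕ) : ℝ≥0∞) / ((2 ^ n - q : ℕ) : ℝ≥0∞))) := by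
  have hm : 1 ≤ 2 ^ k - 1 := Nat.le_sub_one_of_lt (Nat.one_lt_two_pow (by omega))
  have hmN : 2 ^ k - 1 ≤ 2 ^ n - 1 := Nat.sub_le_sub_right (Nat.pow_le_pow_right two_pos hkn.le) 1
  have hminEq := measure_nthSmallest_one_eq μ S hSmeas hunif hsupp hm hq1 (by omega)
  rw [Nat.sub_add_cancel Nat.one_le_two_pow] at hminEq
  have hminGe := measure_le_nthSmallest_one_ne_zero μ S hSmeas hunif hsupp hm hq1 (by omega)
  rw [hGtail, hp q, hminEq, ← mul_assoc, ← add_mul]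
  exact ENNReal.mul_div_mul_right _ _ hminGe (measure_ne_top _ _)

/-- **Corollaries 1 and 3 combined; formula (7) of the paper.**
With `N = 2^n - 1`, `m = 2^k - 1`, `S` a uniformly random `m`-element subset of
`{1, ..., N}` with minimum `W_(1)`, and `G` a random variable on `{1, ..., 2^n}` with
`P(G = j) = p j`, independent of `S`: for `1 ≤ q ≤ N - m + 1`, if
`P(G > q) = 1 - ∑_{j=1}^q p j` and the denominator below is positive, then
`P(G>q) P(W_(1)=q) / (P(G=q) P(W_(1)≥q) + P(G>q) P(W_(1)=q))
  = (1 - ∑_{j≤q} p j) ((2^k-1)/(2^n-q)) / (p q + (1 - ∑_{j≤q} p j) ((2^k-1)/(2^n-q)))`. -/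
theorem grand_single_decoding_error_probability_formula
    (n k : ℕ) (hk : 1 ≤ k) (hkn : k < n)
    {Ω : Type*} [MeasurableSpace Ω] (μ : Measure Ω) [IsProbabilityMeasure μ]
    (S : Ω → Finset ℕ)
    (hSmeas : ∀ s : Finset ℕ, MeasurableSet (S ⁻¹' {s}))
    (hunif : ∀ s ∈ (Finset.Icc 1 (2 ^ n - 1)).powersetCard (2 ^ k - 1),
      μ (S ⁻¹' {s})
        = (((Finset.Icc 1 (2 ^ n - 1)).powersetCard (2 ^ k - 1)).card : ℝ≥0∞)⁻¹)
    (hsupp : μ {ω | S ω ∈ (Finset.Icc 1 (2 ^ n - 1)).powersetCard (2 ^ k - 1)} = 1)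
    (G : Ω → ℕ) (hG : Measurable G)
    (hGrange : ∀ ω, G ω ∈ Finset.Icc 1 (2 ^ n))
    (hindep : ∀ (j : ℕ) (s : Finset ℕ),
      μ ({ω | G ω = j} ∩ S ⁻¹' {s}) = μ {ω | G ω = j} * μ (S ⁻¹' {s}))
    (p : ℕ → ℝ≥0∞) (hp : ∀ j, μ {ω | G ω = j} = p j)
    (q : ℕ) (hq1 : 1 ≤ q) (hqN : q ≤ (2 ^ n - 1) - (2 ^ k - 1) + 1)
    (hGtail : μ {ω | q < G ω} = 1 - ∑ j ∈ Finset.Icc 1 q, p j)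
    (hden : 0 < μ {ω | G ω = q} * μ {ω | q ≤ nthSmallest (S ω) 1} +
      μ {ω | q < G ω} * μ {ω | nthSmallest (S ω) 1 = q}) :
    (μ {ω | q < G ω} * μ {ω | nthSmallest (S ω) 1 = q}) /
      (μ {ω | G ω = q} * μ {ω | q ≤ nthSmallest (S ω) 1} +
        μ {ω | q < G ω} * μ {ω | nthSmallest (S ω) 1 = q})
    = ((1 - ∑ j ∈ Finset.Icc 1 q, p j) *
        (((2 ^ k - 1 : ℕ) : ℝ≥0∞) / ((2 ^ n - q : ℕ) : ℝ≥0∞))) /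
      (p q + (1 - ∑ j ∈ Finset.Icc 1 q, p j) *
        (((2 ^ k - 1 : ℕ) : ℝ≥0∞) / ((2 ^ n - q : ℕ) : ℝ≥0∞))) :=
  grand_single_decoding_error_probability_formula_general n k hk hkn μ S hSmeas hunif hsupp G p hp q
    hq1 hqN hGtail
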